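/- arXiv:1704.04289 — 4 statements merged into one kernel-verified Lean document; each statement's English description precedes it below -/
import Mathlib

section
/- Let C be a D×D real symmetric positive-definite matrix and let N, S be positive reals. Consider the function g(H) = (N/(4S))·Tr(C·H) − (1/2)·log det H restricted to diagonal matrices H with strictly positive diagonal entries. Then g attains its minimum over this set at the unique diagonal matrix H* whose entries are H*_kk = 2S/(N·C_kk) for each k; that is, g(H*) ≤ g(H) for every diagonal H with positive entries, with equality only when H = H*. -/
/-!
Both terms of the objective are separable on diagonal matrices: `Tr(C · diag d) = ∑ₖ Cₖₖ dₖ`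
and `log det (diag d) = ∑ₖ log dₖ`. Each summand `a x - (log x) / 2`, with `a = N Cₖₖ / (4S) > 0`,
exceeds its value at `x = (2a)⁻¹ = 2S / (N Cₖₖ)` by `(t - 1 - log t) / 2` where `t = 2 a x`, and
`log t ≤ t - 1` with equality only at `t = 1`.
-/

open Real Matrix

lemma Matrix.trace_mul_diagonal {ι R : Type*} [Fintype ι] [DecidableEq ι]
    [NonUnitalNonAssocSemiring R] (C : Matrix ι ι R) (d : ι → R) :
    (C * diagonal d).trace = ∑ k, C k k * d k := by
  simp [Matrix.trace, Matrix.mul_diagonal]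

lemma Real.log_det_diagonal {ι : Type*} [Fintype ι] [DecidableEq ι]
    {d : ι → ℝ} (hd : ∀ k, d k ≠ 0) :
    log (diagonal d).det = ∑ k, log (d k) := by
  rw [det_diagonal, log_prod fun k _ => hd k]

section HalfLogObjective

variable {a x : ℝ}

lemma mul_sub_log_div_two_eq (ha : 0 < a) (hx : 0 < x) :
    a * x - log x / 2
      = (a * (2 * a)⁻¹ - log (2 * a)⁻¹ / 2) + (2 * a * x - 1 - log (2 * a * x)) / 2 := by
  rw [log_inv, log_mul (by positivity) hx.ne']
  field_simp
  ring

lemma mul_inv_sub_log_div_two_le (ha : 0 < a) (hx : 0 < x) :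
    a * (2 * a)⁻¹ - log (2 * a)⁻¹ / 2 ≤ a * x - log x / 2 := by
  rw [mul_sub_log_div_two_eq ha hx]
  linarith [log_le_sub_one_of_pos (show 0 < 2 * a * x by positivity)]

lemma mul_inv_sub_log_div_two_lt (ha : 0 < a) (hx : 0 < x) (hne : x ≠ (2 * a)⁻¹) :
    a * (2 * a)⁻¹ - log (2 * a)⁻¹ / 2 < a * x - log x / 2 := by
  have ht : 2 * a * x ≠ 1 := fun h => hne (eq_inv_of_mul_eq_one_right h)
  rw [mul_sub_log_div_two_eq ha hx]
  linarith [log_lt_sub_one_of_pos (show 0 < 2 * a * x by positivity) ht]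

end HalfLogObjective

section SeparableObjective

variable {ι : Type*} [Fintype ι] {a d : ι → ℝ}

lemma sum_mul_inv_sub_log_div_two_le (ha : ∀ k, 0 < a k) (hd : ∀ k, 0 < d k) :
    ∑ k, (a k * (2 * a k)⁻¹ - log (2 * a k)⁻¹ / 2) ≤ ∑ k, (a k * d k - log (d k) / 2) :=
  Finset.sum_le_sum fun k _ => mul_inv_sub_log_div_two_le (ha k) (hd k)

lemma sum_mul_inv_sub_log_div_two_lt (ha : ∀ k, 0 < a k) (hd : ∀ k, 0 < d k)
    (hne : d ≠ fun k => (2 * a k)⁻¹) :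
    ∑ k, (a k * (2 * a k)⁻¹ - log (2 * a k)⁻¹ / 2) < ∑ k, (a k * d k - log (d k) / 2) := by
  obtain ⟨j, hj⟩ := Function.ne_iff.mp hne
  exact Finset.sum_lt_sum (fun k _ => mul_inv_sub_log_div_two_le (ha k) (hd k))
    ⟨j, Finset.mem_univ j, mul_inv_sub_log_div_two_lt (ha j) (hd j) hj⟩

end SeparableObjective

/-- Corollary 1: the optimal *diagonal* preconditioner for constant SGD minimizing
`g(H) = (N/(4S))·Tr(C·H) − (1/2)·log det H` over diagonal matrices with positive
entries is `H*_kk = 2S/(N·C_kk)`. -/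
theorem optimal_diagonal_preconditioner
    (D : ℕ) (C : Matrix (Fin D) (Fin D) ℝ) (hC : C.PosDef)
    (N S : ℝ) (hN : 0 < N) (hS : 0 < S)
    (g : Matrix (Fin D) (Fin D) ℝ → ℝ)
    (hg : ∀ d : Fin D → ℝ, (∀ k, 0 < d k) →
      g (Matrix.diagonal d) = N / (4 * S) * (C * Matrix.diagonal d).trace
        - (1 / 2) * Real.log (Matrix.diagonal d).det)
    (Hstar : Matrix (Fin D) (Fin D) ℝ)
    (hHstar : Hstar = Matrix.diagonal (fun k => 2 * S / (N * C k k))) :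
    ∀ d : Fin D → ℝ, (∀ k, 0 < d k) →
      g Hstar ≤ g (Matrix.diagonal d) ∧
      (g Hstar = g (Matrix.diagonal d) → Matrix.diagonal d = Hstar) := by
  set a : Fin D → ℝ := fun k => N / (4 * S) * C k k
  have ha : ∀ k, 0 < a k := fun k => mul_pos (by positivity) hC.diag_pos
  have hg_sum : ∀ d : Fin D → ℝ, (∀ k, 0 < d k) →
      g (diagonal d) = ∑ k, (a k * d k - log (d k) / 2) := by
    intro d hd
    rw [hg d hd, trace_mul_diagonal, log_det_diagonal fun k => (hd k).ne', Finset.mul_sum,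
      Finset.mul_sum, ← Finset.sum_sub_distrib]
    exact Finset.sum_congr rfl fun k _ => by ring
  have hHstar_inv : Hstar = diagonal fun k => (2 * a k)⁻¹ := by
    rw [hHstar]
    congr 1
    funext k
    have hCkk : C k k ≠ 0 := hC.diag_pos.ne'
    simp only [a]
    field_simp
    ring
  intro d hd
  rw [hHstar_inv, hg_sum d hd, hg_sum _ fun k => inv_pos.mpr (mul_pos two_pos (ha k))]
  refine ⟨sum_mul_inv_sub_log_div_two_le ha hd, fun heq => ?_⟩
  by_contra hne
  exact (sum_mul_inv_sub_log_div_two_lt ha hd fun h => hne (congrArg diagonal h)).ne heq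
end

section
/- Let A and C be D×D real symmetric positive-definite matrices, let N be a positive real, and set H = (2/N)·C⁻¹. Then the matrix Σ = (1/N)·A⁻¹ satisfies the stationarity equation H·A·Σ + Σ·A·H = H·C·H. -/
namespace Matrix

variable {m n α : Type*} [Fintype n] [DecidableEq n] [CommRing α] {A : Matrix n n α}

theorem smul_mul_mul_smul_nonsing_inv (hA : IsUnit A.det) (B : Matrix m n α) (h s : α) :
    h • B * A * (s • A⁻¹) = (h * s) • B := by
  rw [Matrix.smul_mul, Matrix.smul_mul, Matrix.mul_smul, mul_nonsing_inv_cancel_right _ _ hA,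
    smul_smul]

theorem smul_nonsing_inv_mul_mul_smul (hA : IsUnit A.det) (B : Matrix n m α) (s h : α) :
    s • A⁻¹ * A * (h • B) = (s * h) • B := by
  rw [Matrix.smul_mul, nonsing_inv_mul _ hA, Matrix.smul_mul, Matrix.one_mul, smul_smul]

end Matrix

theorem sgfs_exact_posterior_general
    (D : ℕ) (A C : Matrix (Fin D) (Fin D) ℝ) (hA : A.PosDef) (hC : C.PosDef)
    (N : ℝ)
    (H : Matrix (Fin D) (Fin D) ℝ) (hH : H = (2 / N) • C⁻¹)
    (Sig : Matrix (Fin D) (Fin D) ℝ) (hSig : Sig = (1 / N) • A⁻¹) :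
    H * A * Sig + Sig * A * H = H * C * H := by
  have hA_det : IsUnit A.det := hA.det_pos.ne'.isUnit
  have hC_det : IsUnit C.det := hC.det_pos.ne'.isUnit
  subst hH hSig
  rw [Matrix.smul_mul_mul_smul_nonsing_inv hA_det, Matrix.smul_nonsing_inv_mul_mul_smul hA_det,
    Matrix.smul_mul_mul_smul_nonsing_inv hC_det, ← add_smul]
  congr 1
  ring

/-- Exactness of SGFS: with `H = (2/N)·C⁻¹`, the posterior covariance
`Σ = (1/N)·A⁻¹` satisfies the stationarity equation `H·A·Σ + Σ·A·H = H·C·H`. -/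
theorem sgfs_exact_posterior
    (D : ℕ) (A C : Matrix (Fin D) (Fin D) ℝ) (hA : A.PosDef) (hC : C.PosDef)
    (N : ℝ) (hN : 0 < N)
    (H : Matrix (Fin D) (Fin D) ℝ) (hH : H = (2 / N) • C⁻¹)
    (Sig : Matrix (Fin D) (Fin D) ℝ) (hSig : Sig = (1 / N) • A⁻¹) :
    H * A * Sig + Sig * A * H = H * C * H :=
  sgfs_exact_posterior_general D A C hA hC N H hH Sig hSig
end

section
/- Let A be a D×D real symmetric positive-definite matrix, C a D×D real symmetric positive-semidefinite matrix, and let N, S be positive reals and ε ≥ 0. If Σ is a D×D real symmetric matrix satisfying (N/2)·(A·Σ + Σ·A) = I + (εN/(2S))·C, then the matrix Σ − (1/N)·A⁻¹ is positive semidefinite. In particular, when ε = 0 the unique symmetric solution is Σ = (1/N)·A⁻¹. -/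
/-!
`Δ = Σ - (1/N) A⁻¹` solves the Lyapunov equation `AΔ + ΔA = (ε/S) C`. Testing this against an
eigenvector `v` of `Δ` with eigenvalue `λ` gives `v* (ε/S) C v = 2 λ v* A v`, and `v* A v > 0`, so
`λ ≥ 0`. When `ε = 0` the same argument applies to `-Δ`, which forces `Δ = 0`.
-/

open Matrix
open scoped ComplexOrder MatrixOrder

namespace Matrix

variable {n 𝕜 : Type*} [Fintype n] [DecidableEq n] [RCLike 𝕜]

lemma IsHermitian.star_dotProduct_mul_add_mul_mulVec_eigenvectorBasis
    {Δ : Matrix n n 𝕜} (hΔ : Δ.IsHermitian) (A : Matrix n n 𝕜) (i : n) :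
    star ⇑(hΔ.eigenvectorBasis i) ⬝ᵥ ((A * Δ + Δ * A) *ᵥ ⇑(hΔ.eigenvectorBasis i)) =
      2 * (hΔ.eigenvalues i : 𝕜) *
        (star ⇑(hΔ.eigenvectorBasis i) ⬝ᵥ (A *ᵥ ⇑(hΔ.eigenvectorBasis i))) := by
  set v := ⇑(hΔ.eigenvectorBasis i)
  have hv : Δ *ᵥ v = (hΔ.eigenvalues i : 𝕜) • v := by
    rw [hΔ.mulVec_eigenvectorBasis i, RCLike.real_smul_eq_coe_smul (K := 𝕜)]
  have hv' : star v ᵥ* Δ = (hΔ.eigenvalues i : 𝕜) • star v := calc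
    star v ᵥ* Δ = star v ᵥ* Δᴴ := by rw [hΔ.eq]
    _ = star (Δ *ᵥ v) := (star_mulVec _ _).symm
    _ = _ := by rw [hv, star_smul, RCLike.star_def, RCLike.conj_ofReal]
  rw [add_mulVec, dotProduct_add, ← mulVec_mulVec, ← mulVec_mulVec, hv, mulVec_smul,
    dotProduct_mulVec (star v) Δ, hv', dotProduct_smul, smul_dotProduct, smul_eq_mul]
  ring

lemma IsHermitian.posSemidef_of_posSemidef_mul_add_mul {A Δ : Matrix n n 𝕜}
    (hΔ : Δ.IsHermitian) (hA : A.PosDef) (h : (A * Δ + Δ * A).PosSemidef) :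
    Δ.PosSemidef := by
  rw [hΔ.posSemidef_iff_eigenvalues_nonneg]
  intro i
  change 0 ≤ hΔ.eigenvalues i
  have hv : ⇑(hΔ.eigenvectorBasis i) ≠ 0 := by
    simpa using hΔ.eigenvectorBasis.orthonormal.ne_zero i
  have hnonneg := h.re_dotProduct_nonneg ⇑(hΔ.eigenvectorBasis i)
  rw [hΔ.star_dotProduct_mul_add_mul_mulVec_eigenvectorBasis, ← RCLike.ofReal_ofNat,
    ← RCLike.ofReal_mul, RCLike.re_ofReal_mul] at hnonneg
  linarith [nonneg_of_mul_nonneg_left hnonneg (hA.re_dotProduct_pos hv)]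

lemma IsHermitian.eq_zero_of_mul_add_mul_eq_zero {A Δ : Matrix n n 𝕜}
    (hΔ : Δ.IsHermitian) (hA : A.PosDef) (h : A * Δ + Δ * A = 0) : Δ = 0 := by
  have hneg : A * -Δ + -Δ * A = 0 := by simp [← neg_add, h]
  refine le_antisymm ?_ (nonneg_iff_posSemidef.mpr ?_)
  · simpa [le_iff] using hΔ.neg.posSemidef_of_posSemidef_mul_add_mul hA (hneg ▸ .zero)
  · exact hΔ.posSemidef_of_posSemidef_mul_add_mul hA (h ▸ .zero)

end Matrix

/-- SGLD with constant rate (Section 5.1): if the stationary covariance `Σ`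
satisfies `(N/2)·(A·Σ + Σ·A) = I + (εN/(2S))·C` with `A` positive definite and
`C` positive semidefinite, then `Σ − (1/N)·A⁻¹` is positive semidefinite;
in particular when `ε = 0` the unique symmetric solution is `Σ = (1/N)·A⁻¹`. -/
theorem sgld_overestimates_posterior_covariance
    (D : ℕ) (A C Sig : Matrix (Fin D) (Fin D) ℝ)
    (hA : A.PosDef) (hC : C.PosSemidef) (hSig : Sig.IsHermitian)
    (N S ε : ℝ) (hN : 0 < N) (hS : 0 < S) (hε : 0 ≤ ε)
    (hstat : (N / 2) • (A * Sig + Sig * A) = 1 + (ε * N / (2 * S)) • C) :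
    (Sig - (1 / N) • A⁻¹).PosSemidef ∧ (ε = 0 → Sig = (1 / N) • A⁻¹) := by
  have hdet : IsUnit A.det := (isUnit_iff_isUnit_det A).mp hA.isUnit
  have hΔ : (Sig - (1 / N) • A⁻¹).IsHermitian := hSig.sub (hA.inv.isHermitian.smul (.all _))
  have hlyap : A * (Sig - (1 / N) • A⁻¹) + (Sig - (1 / N) • A⁻¹) * A = (ε / S) • C := by
    rw [mul_sub, sub_mul, Matrix.mul_smul, Matrix.smul_mul, mul_nonsing_inv _ hdet,
      nonsing_inv_mul _ hdet]
    linear_combination (norm := skip) (2 / N) • hstat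
    match_scalars <;> field_simp <;> ring
  refine ⟨hΔ.posSemidef_of_posSemidef_mul_add_mul hA (hlyap ▸ hC.smul (div_nonneg hε hS.le)),
    fun hε0 => sub_eq_zero.mp (hΔ.eq_zero_of_mul_add_mul_eq_zero hA ?_)⟩
  rw [hlyap, hε0, zero_div, zero_smul]
end

section
/- Let A be a D×D real symmetric positive-definite matrix, Σ a D×D real matrix, and ε, T positive reals. Define the kernel K(t,s) = exp(−ε(t−s)A)·Σ for t ≥ s and K(t,s) = Σ·exp(−ε(s−t)A) for t < s, where exp is the matrix exponential. Then (1/T²)·∫₀ᵀ∫₀ᵀ K(t,s) ds dt = (1/(εT))·(A⁻¹·Σ + Σ·A⁻¹) + (1/(ε²T²))·( A⁻²·(exp(−εT·A) − I)·Σ + Σ·(exp(−εT·A) − I)·A⁻² ). -/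
/-!
Splitting the inner integral at `s = t`, the past contributes `(∫₀ᵗ e^{-εuA} du) Σ` and the future
`Σ (∫₀^{T-t} e^{-εuA} du)`; after `t ↦ T - t` in the second term the double integral is
`QΣ + ΣQ` with `Q = ∫₀ᵀ ∫₀ᵗ e^{-εuA} du dt`. Integrating the exponential twice gives
`Q = (T/ε) A⁻¹ + ε⁻² A⁻² (e^{-εTA} - 1)`, and since `A⁻²` commutes with `e^{-εTA}` dividing by `T²`
yields the formula.
-/

open MeasureTheory intervalIntegral

attribute [local instance] Matrix.frobeniusNormedAddCommGroup Matrix.frobeniusNormedSpace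

open NormedSpace Set
open scoped Interval

section BanachAlgebra

variable {𝔸 : Type*} [NormedRing 𝔸] [NormedAlgebra ℝ 𝔸] [CompleteSpace 𝔸]

theorem intervalIntegral_const_mul {f : ℝ → 𝔸} {a b : ℝ} (hf : IntervalIntegrable f volume a b)
    (c : 𝔸) : ∫ x in a..b, c * f x = c * ∫ x in a..b, f x :=
  (ContinuousLinearMap.mul ℝ 𝔸 c).intervalIntegral_comp_comm hf

theorem intervalIntegral_mul_const {f : ℝ → 𝔸} {a b : ℝ} (hf : IntervalIntegrable f volume a b)
    (c : 𝔸) : ∫ x in a..b, f x * c = (∫ x in a..b, f x) * c :=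
  ((ContinuousLinearMap.mul ℝ 𝔸).flip c).intervalIntegral_comp_comm hf

theorem continuous_exp_smul (B : 𝔸) : Continuous fun u : ℝ => exp (u • B) :=
  (differentiable_exp_smul_const ℝ B).continuous

theorem integral_exp_smul {B B' : 𝔸} (hB : B' * B = 1) (a b : ℝ) :
    ∫ u in a..b, exp (u • B) = B' * (exp (b • B) - exp (a • B)) := by
  have hderiv (u : ℝ) : HasDerivAt (fun u : ℝ => B' * exp (u • B)) (exp (u • B)) u := by
    simpa only [← mul_assoc, hB, one_mul] using
      (hasDerivAt_exp_smul_const' (𝕂 := ℝ) B u).const_mul B'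
  rw [integral_eq_sub_of_hasDerivAt (fun u _ => hderiv u)
    ((continuous_exp_smul B).intervalIntegrable a b), mul_sub]

theorem integral_integral_exp_smul {B B' : 𝔸} (hB : B' * B = 1) (T : ℝ) :
    ∫ t in 0..T, ∫ u in 0..t, exp (u • B) = B' * (B' * (exp (T • B) - 1) - T • 1) := by
  have hint : IntervalIntegrable (fun t : ℝ => exp (t • B)) volume 0 T :=
    (continuous_exp_smul B).intervalIntegrable 0 T
  simp only [integral_exp_smul hB, zero_smul, exp_zero]
  rw [intervalIntegral_const_mul (hint.sub intervalIntegrable_const),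
    intervalIntegral.integral_sub hint intervalIntegrable_const, integral_exp_smul hB,
    intervalIntegral.integral_const, sub_zero, zero_smul, exp_zero]

theorem continuous_exp_neg_mul_smul (ε : ℝ) (A : 𝔸) :
    Continuous fun u : ℝ => exp (-((ε * u) • A)) := by
  simpa only [smul_neg, smul_smul, mul_comm] using continuous_exp_smul (-(ε • A))

theorem integral_integral_exp_neg_mul_smul {A A' : 𝔸} (hA : A' * A = 1) {ε : ℝ} (hε : ε ≠ 0)
    (T : ℝ) :
    ∫ t in 0..T, ∫ u in 0..t, exp (-((ε * u) • A))
      = ε⁻¹ ^ 2 • (A' ^ 2 * (exp (-((ε * T) • A)) - 1)) + (T * ε⁻¹) • A' := by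
  have hexp (u : ℝ) : -((ε * u) • A) = u • -(ε • A) := by rw [smul_neg, smul_smul, mul_comm]
  have hinv : -(ε⁻¹ • A') * -(ε • A) = 1 := by
    rw [neg_mul_neg, smul_mul_smul_comm, hA, inv_mul_cancel₀ hε, one_smul]
  simp only [hexp]
  rw [integral_integral_exp_smul hinv]
  simp only [mul_sub, mul_neg, neg_mul, smul_mul_assoc, mul_smul_comm, mul_one, pow_two,
    mul_assoc]
  module

/-- `E[θ(t) θ(s)ᵀ]` for a stationary linear process with propagator `f` and stationary
covariance `S`. -/
noncomputable def stationaryKernel (f : ℝ → 𝔸) (S : 𝔸) (t s : ℝ) : 𝔸 :=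
  if s ≤ t then f (t - s) * S else S * f (s - t)

theorem integral_stationaryKernel {f : ℝ → 𝔸} (hf : Continuous f) (S : 𝔸) {t T : ℝ}
    (ht : t ∈ Icc 0 T) :
    ∫ s in 0..T, stationaryKernel f S t s
      = (∫ u in 0..t, f u) * S + S * ∫ u in 0..T - t, f u := by
  have hpast : EqOn (stationaryKernel f S t) (fun s => f (t - s) * S) (Ι 0 t) := by
    intro s hs
    rw [uIoc_of_le ht.1] at hs
    exact if_pos hs.2
  have hfuture : EqOn (stationaryKernel f S t) (fun s => S * f (s - t)) (Ι t T) := by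
    intro s hs
    rw [uIoc_of_le ht.2] at hs
    exact if_neg (not_le.2 hs.1)
  have hpast_int : IntervalIntegrable (fun s => f (t - s)) volume 0 t := by
    apply Continuous.intervalIntegrable; fun_prop
  have hfuture_int : IntervalIntegrable (fun s => f (s - t)) volume t T := by
    apply Continuous.intervalIntegrable; fun_prop
  rw [← integral_add_adjacent_intervals ((hpast_int.mul_const S).congr hpast.symm)
      ((hfuture_int.const_mul S).congr hfuture.symm),
    integral_congr_ae (ae_of_all _ hpast), integral_congr_ae (ae_of_all _ hfuture),
    intervalIntegral_mul_const hpast_int, intervalIntegral_const_mul hfuture_int,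
    integral_comp_sub_left f, integral_comp_sub_right f, sub_self, sub_zero]

theorem integral_integral_stationaryKernel {f : ℝ → 𝔸} (hf : Continuous f) (S : 𝔸) {T : ℝ}
    (hT : 0 ≤ T) :
    ∫ t in 0..T, ∫ s in 0..T, stationaryKernel f S t s
      = (∫ t in 0..T, ∫ u in 0..t, f u) * S + S * ∫ t in 0..T, ∫ u in 0..t, f u := by
  have hprimitive : Continuous fun x => ∫ u in 0..x, f u :=
    continuous_primitive (fun a b => hf.intervalIntegrable a b) 0
  have hinner : EqOn (fun t => ∫ s in 0..T, stationaryKernel f S t s)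
      (fun t => (∫ u in 0..t, f u) * S + S * ∫ u in 0..T - t, f u) (uIcc 0 T) :=
    fun t ht => integral_stationaryKernel hf S (by rwa [uIcc_of_le hT] at ht)
  have hint : IntervalIntegrable (fun t => ∫ u in 0..t, f u) volume 0 T :=
    hprimitive.intervalIntegrable 0 T
  have hint_rev : IntervalIntegrable (fun t => ∫ u in 0..T - t, f u) volume 0 T := by
    apply Continuous.intervalIntegrable; fun_prop
  rw [integral_congr hinner,
    intervalIntegral.integral_add (hint.mul_const S) (hint_rev.const_mul S),
    intervalIntegral_mul_const hint, intervalIntegral_const_mul hint_rev,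
    integral_comp_sub_left (fun x => ∫ u in 0..x, f u), sub_self, sub_zero]

theorem smul_integral_integral_stationaryKernel_exp {A A' : 𝔸} (hleft : A' * A = 1)
    (hright : A * A' = 1) (S : 𝔸) {ε T : ℝ} (hε : ε ≠ 0) (hT : 0 < T) :
    (1 / T ^ 2) • ∫ t in 0..T, ∫ s in 0..T, stationaryKernel (fun u => exp (-((ε * u) • A))) S t s
      = (1 / (ε * T)) • (A' * S + S * A')
        + (1 / (ε ^ 2 * T ^ 2)) •
          (A' ^ 2 * (exp (-((ε * T) • A)) - 1) * S + S * (exp (-((ε * T) • A)) - 1) * A' ^ 2) := by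
  have hcomm : Commute (A' ^ 2) (exp (-((ε * T) • A)) - 1) :=
    (((show Commute A' A from hleft.trans hright.symm).pow_left 2).smul_right _
      |>.neg_right |>.exp_right).sub_right (Commute.one_right _)
  rw [integral_integral_stationaryKernel (continuous_exp_neg_mul_smul ε A) S hT.le,
    integral_integral_exp_neg_mul_smul hleft hε, hcomm.eq]
  simp only [add_mul, mul_add, smul_mul_assoc, mul_smul_comm, smul_add, smul_smul, mul_assoc]
  match_scalars <;> field_simp

end BanachAlgebra

attribute [local instance] Matrix.frobeniusNormedRing Matrix.frobeniusNormedAlgebra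

/-- Appendix G (Iterate Averaging): the double time-average of the stationary
autocorrelation kernel `K(t,s)` of the Ornstein–Uhlenbeck process equals
`(1/(εT))(A⁻¹Σ + ΣA⁻¹)` plus the exponential correction terms. -/
theorem iterate_averaging_double_integral
    (D : ℕ) (A Sig : Matrix (Fin D) (Fin D) ℝ) (hA : A.PosDef)
    (ε T : ℝ) (hε : 0 < ε) (hT : 0 < T)
    (K : ℝ → ℝ → Matrix (Fin D) (Fin D) ℝ)
    (hK : ∀ t s : ℝ, K t s =
      if s ≤ t then NormedSpace.exp (-((ε * (t - s)) • A)) * Sig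
      else Sig * NormedSpace.exp (-((ε * (s - t)) • A))) :
    (1 / T ^ 2) • (∫ t in (0 : ℝ)..T, ∫ s in (0 : ℝ)..T, K t s)
      = (1 / (ε * T)) • (A⁻¹ * Sig + Sig * A⁻¹)
        + (1 / (ε ^ 2 * T ^ 2)) •
          (A⁻¹ ^ 2 * (NormedSpace.exp (-((ε * T) • A)) - 1) * Sig
            + Sig * (NormedSpace.exp (-((ε * T) • A)) - 1) * A⁻¹ ^ 2) := by
  have hdet : IsUnit A.det := (Matrix.isUnit_iff_isUnit_det A).1 hA.isUnit
  have hK' : K = stationaryKernel (fun u => exp (-((ε * u) • A))) Sig :=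
    funext fun t => funext fun s => hK t s
  rw [hK']
  exact smul_integral_integral_stationaryKernel_exp (Matrix.nonsing_inv_mul A hdet)
    (Matrix.mul_nonsing_inv A hdet) Sig hε.ne' hT
end
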